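/- The polynomials A_n(q) = Σ_{P ∈ M_n} q^{2·sh_u(P) + sh_h(P)} satisfy the recursion A_0(q) = 1 and A_n(q) = A_{n-1}(q) + Σ_{k=0}^{n-2} q^k A_k(q) A_{n-2-k}(q) for n ≥ 1; i.e., A_n(q) = M_n(q), the q-Motzkin polynomial. -/

import Mathlib

/-- Steps of a Motzkin path: up, horizontal, down. -/
inductive MStep : Type
  | U | H | D
deriving DecidableEq

instance : Fintype MStep where
  elems := {MStep.U, MStep.H, MStep.D}
  complete := by intro x; cases x <;> simp

/-- The height of the `i`-th step of `P` (the `y`-coordinate of its starting point),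
i.e. the number of up steps minus the number of down steps among the first `i` steps. -/
def stepHeight (P : List MStep) (i : ℕ) : ℕ :=
  (P.take i).count MStep.U - (P.take i).count MStep.D

/-- `P` is a Motzkin path: every prefix has at least as many up steps as down steps,
and the whole word has equally many up and down steps. -/
def IsMotzkin (P : List MStep) : Prop :=
  (∀ i ≤ P.length, (P.take i).count MStep.D ≤ (P.take i).count MStep.U) ∧
    P.count MStep.D = P.count MStep.U

def upCount (P : List MStep) : ℕ := P.count MStep.U
def horCount (P : List MStep) : ℕ := P.count MStep.H
def downCount (P : List MStep) : ℕ := P.count MStep.D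

/-- Sum of the heights of all steps of `P` equal to `s`. -/
def shSum (s : MStep) (P : List MStep) : ℕ :=
  ∑ i ∈ Finset.range P.length, if P.getD i MStep.H = s then stepHeight P i else 0

/-- The area between a Motzkin path and the x-axis (sum over steps of the
average of the heights of the two endpoints of the step). -/
def area (P : List MStep) : ℕ :=
  (∑ i ∈ Finset.range P.length, (stepHeight P i + stepHeight P (i + 1))) / 2

open Classical in
/-- The finite set of Motzkin paths of length `n`. -/
noncomputable def motzkinSet (n : ℕ) : Finset (List MStep) :=
  ((Finset.univ : Finset (Fin n → MStep)).image fun f => List.ofFn f).filter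
    fun P => IsMotzkin P

open Polynomial

/-- `A n q = ∑_{P ∈ M_n} q^{2·sh_u P + sh_h P}`. -/
noncomputable def Apoly (n : ℕ) : Polynomial ℤ :=
  ∑ P ∈ motzkinSet n, (X : Polynomial ℤ) ^ (2 * shSum MStep.U P + shSum MStep.H P)

/-!
A nonempty Motzkin path is uniquely either `H Q` or `U A D B` with `A`, `B` Motzkin paths (first
return to the axis). Prepending `H` changes no height. In `U A D B` the block `U A D` ends at
height 0, so `B` keeps its heights, while every step of `A` is raised by one; this adds
`2·#U(A) + #H(A) = #U(A) + #H(A) + #D(A) = |A|` to `2·sh_u + sh_h`, which is the factor `q^k`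
for `|A| = k`. So `A_n` satisfies the q-Motzkin recursion, and strong induction identifies it
with any sequence satisfying it.
-/

open MStep

theorem List.prefix_append_cases {α : Type*} {L A B : List α} (h : L <+: A ++ B) :
    L <+: A ∨ ∃ t, t <+: B ∧ L = A ++ t := by
  obtain ⟨r, hr⟩ := h
  rcases List.append_eq_append_iff.mp hr with ⟨a, rfl, -⟩ | ⟨c, rfl, rfl⟩
  · exact .inl ⟨a, rfl⟩
  · exact .inr ⟨c, ⟨r, rfl⟩, rfl⟩

theorem isMotzkin_iff_prefix {P : List MStep} :
    IsMotzkin P ↔ (∀ L, L <+: P → L.count D ≤ L.count U) ∧ P.count D = P.count U := by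
  refine and_congr_left fun _ => ⟨fun h L hL => ?_, fun h i _ => h _ (P.take_prefix i)⟩
  rw [List.prefix_iff_eq_take.mp hL]
  exact h _ hL.length_le

theorem isMotzkin_nil : IsMotzkin [] :=
  isMotzkin_iff_prefix.mpr ⟨fun L hL => by simp [List.prefix_nil.mp hL], rfl⟩

def elevate (A : List MStep) : List MStep := U :: (A ++ [D])

namespace IsMotzkin

variable {P A B : List MStep}

theorem count_D_le (h : IsMotzkin P) {L : List MStep} (hL : L <+: P) : L.count D ≤ L.count U :=
  (isMotzkin_iff_prefix.mp h).1 L hL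

theorem append (hA : IsMotzkin A) (hB : IsMotzkin B) : IsMotzkin (A ++ B) := by
  refine isMotzkin_iff_prefix.mpr ⟨fun L hL => ?_, by simp [hA.2, hB.2]⟩
  rcases List.prefix_append_cases hL with hL | ⟨t, ht, rfl⟩
  · exact hA.count_D_le hL
  · simp only [List.count_append, hA.2]
    exact Nat.add_le_add_left (hB.count_D_le ht) _

theorem not_cons_D : ¬ IsMotzkin (D :: P) := fun h => by
  simpa using h.count_D_le (List.cons_prefix_cons.mpr ⟨rfl, List.nil_prefix⟩)

end IsMotzkin

theorem isMotzkin_elevate {A : List MStep} (hA : IsMotzkin A) : IsMotzkin (elevate A) := by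
  refine isMotzkin_iff_prefix.mpr ⟨fun L hL => ?_, by simp [elevate, hA.2]⟩
  rcases List.prefix_cons_iff.mp hL with rfl | ⟨t, rfl, ht⟩
  · simp
  rcases List.prefix_concat_iff.mp ht with rfl | ht
  · simp [hA.2]
  · simpa using (hA.count_D_le ht).trans (Nat.le_succ _)

theorem isMotzkin_cons_H {P : List MStep} : IsMotzkin (H :: P) ↔ IsMotzkin P := by
  constructor
  · refine fun h => isMotzkin_iff_prefix.mpr ⟨fun L hL => ?_, by simpa using h.2⟩
    simpa using h.count_D_le (List.cons_prefix_cons.mpr ⟨rfl, hL⟩)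
  · refine fun h => isMotzkin_iff_prefix.mpr ⟨fun L hL => ?_, by simpa using h.2⟩
    rcases List.prefix_cons_iff.mp hL with rfl | ⟨t, rfl, ht⟩
    · simp
    · simpa using h.count_D_le ht

theorem exists_eq_append_D_of_prefix_count_lt {Q : List MStep}
    (h : ∃ L, L <+: Q ∧ L.count U < L.count D) : ∃ A B, Q = A ++ D :: B ∧ IsMotzkin A := by
  induction Q using List.reverseRecOn with
  | nil => obtain ⟨L, hL, hlt⟩ := h; simp [List.prefix_nil.mp hL] at hlt
  | append_singleton Q a ih =>
    by_cases hQ : ∃ L, L <+: Q ∧ L.count U < L.count D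
    · obtain ⟨A, B, rfl, hA⟩ := ih hQ
      exact ⟨A, B ++ [a], by simp, hA⟩
    -- otherwise `Q ++ [a]` is the shortest prefix with more `D`s than `U`s
    push Not at hQ
    obtain ⟨L, hL, hlt⟩ := h
    rcases List.prefix_concat_iff.mp hL with rfl | hL
    · have hle := hQ Q List.prefix_rfl
      cases a
      case U | H => simp at hlt; omega
      case D => exact ⟨Q, [], rfl, isMotzkin_iff_prefix.mpr ⟨hQ, by simp at hlt; omega⟩⟩
    · exact absurd hlt (hQ L hL).not_gt

theorem IsMotzkin.exists_eq_elevate_append {Q : List MStep} (h : IsMotzkin (U :: Q)) :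
    ∃ A B, U :: Q = elevate A ++ B ∧ IsMotzkin A ∧ IsMotzkin B := by
  have hbal : Q.count D = Q.count U + 1 := by simpa using h.2
  obtain ⟨A, B, rfl, hA⟩ :=
    exists_eq_append_D_of_prefix_count_lt ⟨Q, List.prefix_rfl, by omega⟩
  refine ⟨A, B, by simp [elevate], hA, isMotzkin_iff_prefix.mpr ⟨fun L hL => ?_, ?_⟩⟩
  · simpa [hA.2, add_assoc] using h.count_D_le (L := U :: (A ++ D :: L)) (by simpa using hL)
  · simpa [hA.2, add_assoc] using hbal

theorem elevate_append_inj {A A' B B' : List MStep} (hA : IsMotzkin A) (hA' : IsMotzkin A')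
    (h : elevate A ++ B = elevate A' ++ B') : A = A' ∧ B = B' := by
  have key : ∀ {A A' B B' : List MStep}, IsMotzkin A → IsMotzkin A' →
      A ++ D :: B = A' ++ D :: B' → A.length ≥ A'.length := by
    intro A A' B B' hA hA' h
    by_contra! hlt
    have hpre : A ++ [D] <+: A' := List.prefix_of_prefix_length_le (by rw [← h]; simp)
      (List.prefix_append _ _) (by simpa using hlt)
    simpa [hA.2] using hA'.count_D_le hpre
  simp only [elevate, List.cons_append, List.append_assoc,
    List.cons.injEq, true_and] at h
  obtain ⟨rfl, hB⟩ := List.append_inj h (le_antisymm (key hA' hA h.symm) (key hA hA' h))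
  exact ⟨rfl, List.cons_injective hB⟩

theorem List.count_eq_sum_range_getD {α : Type*} [DecidableEq α] (l : List α) (a d : α) :
    l.count a = ∑ i ∈ Finset.range l.length, if l.getD i d = a then 1 else 0 := by
  induction l with
  | nil => simp
  | cons b l ih =>
    rw [List.length_cons, Finset.sum_range_succ']
    simp only [List.getD_cons_succ, List.getD_cons_zero, ← ih, List.count_cons, beq_iff_eq]

theorem length_eq_count_U_add_count_H_add_count_D (P : List MStep) :
    P.length = P.count U + P.count H + P.count D := by
  induction P with
  | nil => rfl
  | cons a P ih => cases a <;> simp [ih] <;> omega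

theorem stepHeight_zero (P : List MStep) : stepHeight P 0 = 0 := by simp [stepHeight]

theorem stepHeight_append_of_le {A : List MStep} (B : List MStep) {i : ℕ} (hi : i ≤ A.length) :
    stepHeight (A ++ B) i = stepHeight A i := by
  rw [stepHeight, List.take_append_of_le_length hi, stepHeight]

theorem stepHeight_append_length_add {A : List MStep} (B : List MStep) (hA : A.count D = A.count U)
    (i : ℕ) : stepHeight (A ++ B) (A.length + i) = stepHeight B i := by
  simp only [stepHeight, List.take_length_add_append, List.count_append, hA]
  omega

theorem stepHeight_cons_U {Q : List MStep} {i : ℕ}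
    (h : (Q.take i).count D ≤ (Q.take i).count U) :
    stepHeight (U :: Q) (i + 1) = stepHeight Q i + 1 := by
  rw [stepHeight, List.take_succ_cons, List.count_cons_self, List.count_cons_of_ne (by decide),
    stepHeight]
  omega

theorem shSum_singleton (s a : MStep) : shSum s [a] = 0 := by simp [shSum, stepHeight_zero]

theorem shSum_append (s : MStep) {A : List MStep} (B : List MStep) (hA : A.count D = A.count U) :
    shSum s (A ++ B) = shSum s A + shSum s B := by
  rw [shSum, List.length_append, Finset.sum_range_add, shSum, shSum]
  congr 1
  · refine Finset.sum_congr rfl fun i hi => ?_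
    rw [Finset.mem_range] at hi
    rw [List.getD_append _ _ _ _ hi, stepHeight_append_of_le B hi.le]
  · refine Finset.sum_congr rfl fun i _ => ?_
    rw [List.getD_append_right _ _ _ _ (by omega), Nat.add_sub_cancel_left,
      stepHeight_append_length_add B hA]

theorem shSum_cons_U (s : MStep) {Q : List MStep}
    (hQ : ∀ i < Q.length, (Q.take i).count D ≤ (Q.take i).count U) :
    shSum s (U :: Q) = shSum s Q + Q.count s := by
  rw [shSum, List.length_cons, Finset.sum_range_succ', shSum, Q.count_eq_sum_range_getD s H,
    ← Finset.sum_add_distrib]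
  simp only [stepHeight_zero, ite_self, add_zero, List.getD_cons_succ]
  refine Finset.sum_congr rfl fun i hi => ?_
  rw [stepHeight_cons_U (hQ i (Finset.mem_range.mp hi))]
  split_ifs <;> rfl

theorem shSum_elevate {A : List MStep} (hA : IsMotzkin A) {s : MStep} (hs : s ≠ D) :
    shSum s (elevate A) = shSum s A + A.count s := by
  have hprefix : ∀ i < (A ++ [D]).length,
      ((A ++ [D]).take i).count D ≤ ((A ++ [D]).take i).count U := fun i hi => by
    rw [List.take_append_of_le_length (by simpa [Nat.lt_succ_iff] using hi)]
    exact hA.count_D_le (A.take_prefix i)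
  rw [elevate, shSum_cons_U s hprefix, shSum_append s [D] hA.2, shSum_singleton,
    List.count_append, List.count_singleton, beq_false_of_ne (Ne.symm hs)]
  rfl

def pathWeight (P : List MStep) : ℕ := 2 * shSum U P + shSum H P

theorem pathWeight_cons_H (P : List MStep) : pathWeight (H :: P) = pathWeight P := by
  change pathWeight ([H] ++ P) = _
  simp only [pathWeight, shSum_append _ P (rfl : [H].count D = [H].count U), shSum_singleton,
    zero_add]

theorem pathWeight_elevate_append {A : List MStep} (hA : IsMotzkin A) (B : List MStep) :
    pathWeight (elevate A ++ B) = A.length + pathWeight A + pathWeight B := by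
  simp only [pathWeight, shSum_append _ B (isMotzkin_elevate hA).2,
    shSum_elevate hA (by decide : U ≠ D), shSum_elevate hA (by decide : H ≠ D),
    length_eq_count_U_add_count_H_add_count_D A, hA.2]
  ring

theorem mem_motzkinSet {n : ℕ} {P : List MStep} :
    P ∈ motzkinSet n ↔ P.length = n ∧ IsMotzkin P := by
  simp only [motzkinSet, Finset.mem_filter, Finset.mem_image, Finset.mem_univ, true_and]
  constructor
  · rintro ⟨⟨f, rfl⟩, hP⟩
    exact ⟨List.length_ofFn, hP⟩
  · rintro ⟨rfl, hP⟩
    exact ⟨⟨P.get, List.ofFn_get P⟩, hP⟩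

theorem motzkinSet_zero : motzkinSet 0 = {[]} := by
  ext P
  simp only [mem_motzkinSet, List.length_eq_zero_iff, Finset.mem_singleton, and_iff_left_iff_imp]
  rintro rfl
  exact isMotzkin_nil

theorem motzkinSet_succ (m : ℕ) :
    motzkinSet (m + 1) = (motzkinSet m).image (H :: ·) ∪
      (Finset.range m).biUnion fun k =>
        (motzkinSet k ×ˢ motzkinSet (m - 1 - k)).image fun p => elevate p.1 ++ p.2 := by
  ext P
  simp only [Finset.mem_union, Finset.mem_image, Finset.mem_biUnion, Finset.mem_range,
    Finset.mem_product, mem_motzkinSet, Prod.exists]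
  constructor
  · rintro ⟨hlen, hP⟩
    rcases P with _ | ⟨_ | _ | _, Q⟩
    · simp at hlen
    · obtain ⟨A, B, hQ, hA, hB⟩ := hP.exists_eq_elevate_append
      rw [hQ] at hlen ⊢
      simp only [elevate, List.cons_append, List.append_assoc, List.nil_append, List.length_cons,
        List.length_append, Nat.add_right_cancel_iff] at hlen
      exact .inr ⟨A.length, by omega, A, B, ⟨⟨rfl, hA⟩, by omega, hB⟩, rfl⟩
    · exact .inl ⟨Q, ⟨by simpa using hlen, isMotzkin_cons_H.mp hP⟩, rfl⟩
    · exact absurd hP IsMotzkin.not_cons_D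
  · rintro (⟨Q, ⟨rfl, hQ⟩, rfl⟩ | ⟨k, hk, A, B, ⟨⟨rfl, hA⟩, hB, hBm⟩, rfl⟩)
    · exact ⟨rfl, isMotzkin_cons_H.mpr hQ⟩
    · exact ⟨by simp [elevate]; omega, (isMotzkin_elevate hA).append hBm⟩

theorem sum_motzkinSet_succ {M : Type*} [AddCommMonoid M] (f : List MStep → M) (m : ℕ) :
    ∑ P ∈ motzkinSet (m + 1), f P = ∑ P ∈ motzkinSet m, f (H :: P) +
      ∑ k ∈ Finset.range m, ∑ A ∈ motzkinSet k, ∑ B ∈ motzkinSet (m - 1 - k),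
        f (elevate A ++ B) := by
  have hdisj : Disjoint ((motzkinSet m).image (H :: ·)) ((Finset.range m).biUnion fun k =>
      (motzkinSet k ×ˢ motzkinSet (m - 1 - k)).image fun p => elevate p.1 ++ p.2) := by
    simp [Finset.disjoint_left, elevate]
  have hpair : (Finset.range m : Set ℕ).PairwiseDisjoint fun k =>
      (motzkinSet k ×ˢ motzkinSet (m - 1 - k)).image fun p => elevate p.1 ++ p.2 := by
    intro k _ k' _ hne
    simp only [Function.onFun, Finset.disjoint_left, Finset.mem_image, Finset.mem_product,
      mem_motzkinSet, Prod.exists, not_exists, not_and]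
    rintro _ ⟨A, B, ⟨⟨rfl, hA⟩, -⟩, rfl⟩ A' B' ⟨⟨rfl, hA'⟩, -⟩ h
    exact hne (congrArg List.length (elevate_append_inj hA' hA h).1.symm)
  rw [motzkinSet_succ, Finset.sum_union hdisj, Finset.sum_biUnion hpair,
    Finset.sum_image fun _ _ _ _ h => List.cons_injective h]
  congr 1
  refine Finset.sum_congr rfl fun k _ => ?_
  rw [Finset.sum_image, Finset.sum_product]
  rintro ⟨A, B⟩ hAB ⟨A', B'⟩ hAB' h
  simp only [Finset.coe_product, Set.mem_prod, Finset.mem_coe, mem_motzkinSet] at hAB hAB'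
  obtain ⟨rfl, rfl⟩ := elevate_append_inj hAB.1.2 hAB'.1.2 h
  rfl

theorem Apoly_eq_sum_pathWeight (n : ℕ) :
    Apoly n = ∑ P ∈ motzkinSet n, X ^ pathWeight P := rfl

theorem Apoly_zero : Apoly 0 = 1 := by
  rw [Apoly_eq_sum_pathWeight, motzkinSet_zero, Finset.sum_singleton]
  simp [pathWeight, shSum]

theorem Apoly_succ (m : ℕ) :
    Apoly (m + 1) = Apoly m + ∑ k ∈ Finset.range m, X ^ k * Apoly k * Apoly (m - 1 - k) := by
  rw [Apoly_eq_sum_pathWeight, sum_motzkinSet_succ]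
  simp only [pathWeight_cons_H, ← Apoly_eq_sum_pathWeight, add_right_inj]
  refine Finset.sum_congr rfl fun k _ => ?_
  rw [Apoly_eq_sum_pathWeight, Apoly_eq_sum_pathWeight, mul_assoc, Finset.sum_mul_sum,
    Finset.mul_sum]
  refine Finset.sum_congr rfl fun A hAk => ?_
  obtain ⟨rfl, hA⟩ := mem_motzkinSet.mp hAk
  rw [Finset.mul_sum]
  refine Finset.sum_congr rfl fun B _ => ?_
  rw [pathWeight_elevate_append hA, pow_add, pow_add, mul_assoc]

/-- The polynomials `A n = ∑_{P ∈ M_n} q^{2·sh_u P + sh_h P}` satisfy `A 0 = 1` and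
`A n = A (n-1) + ∑_{k=0}^{n-2} q^k A k A (n-2-k)` for `n ≥ 1`; hence `A n` equals the
q-Motzkin polynomial `Mq n`. -/
theorem Apoly_eq_qMotzkin (Mq : ℕ → Polynomial ℤ) (hq0 : Mq 0 = 1)
    (hqrec : ∀ n, 1 ≤ n →
      Mq n = Mq (n - 1) +
        ∑ k ∈ Finset.range (n - 1), X ^ k * Mq k * Mq (n - 2 - k)) :
    Apoly 0 = 1 ∧
      (∀ n, 1 ≤ n →
        Apoly n = Apoly (n - 1) +
          ∑ k ∈ Finset.range (n - 1), X ^ k * Apoly k * Apoly (n - 2 - k)) ∧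
      ∀ n, Apoly n = Mq n := by
  have hrec : ∀ n, 1 ≤ n →
      Apoly n = Apoly (n - 1) +
        ∑ k ∈ Finset.range (n - 1), X ^ k * Apoly k * Apoly (n - 2 - k) := by
    rintro (_ | m) hm
    · omega
    · -- `m + 1 - 2 - k` reduces to `m - 1 - k`
      rw [Apoly_succ, Nat.add_sub_cancel]
      rfl
  refine ⟨Apoly_zero, hrec, fun n => ?_⟩
  induction n using Nat.strong_induction_on with
  | _ n ih =>
    rcases n.eq_zero_or_pos with rfl | hn
    · rw [Apoly_zero, hq0]
    rw [hrec n hn, hqrec n hn, ih (n - 1) (by omega), add_right_inj]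
    refine Finset.sum_congr rfl fun k hk => ?_
    rw [Finset.mem_range] at hk
    rw [ih k (by omega), ih (n - 2 - k) (by omega)]
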